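/- For every noncomputable set A, the class of sets B such that Γ_B(A) = 1/2 has measure 1. -/

import Mathlib

/-! Almost every `B` is random relative to `A`, which forces `Γ_B(A) ≥ 1/2`, and by Sacks'
theorem almost no `B` computes `A`, which rules out `Γ_B(A) = 1`. -/

open MeasureTheory

theorem measure_eq_one_of_diff_subset {α : Type*} [MeasurableSpace α] {μ : Measure α}
    [IsProbabilityMeasure μ] {s t u : Set α} (hs : μ s = 1) (ht : μ t = 0) (hsub : s \ t ⊆ u) :
    μ u = 1 :=
  le_antisymm prob_le_one <| calc
    1 = μ (s \ t) := by rw [measure_sdiff_null ht, hs]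
    _ ≤ μ u := measure_mono hsub

/-- For every noncomputable set `A`, measure-1 many `B` satisfy `Γ_B(A) = 1/2`.
Here `μ` is the fair-coin measure on Cantor space, `Gamma A B` denotes `Γ_B(A)`,
`leT X B` means `B ≥_T X`, and `Rand A B` means `B` is 1-random relative to `A`;
the facts listed in the paper (the values of `Γ`, `Γ_B(A) = 1 ↔ B ≥_T A`,
randomness has measure one and forces `Γ_B(A) ≥ 1/2`, and Sacks' theorem)
are hypotheses. -/
theorem measure_one_Gamma_half
    (μ : Measure (ℕ → Bool)) [IsProbabilityMeasure μ]
    (Gamma : (ℕ → Bool) → (ℕ → Bool) → ℝ)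
    (leT : (ℕ → Bool) → (ℕ → Bool) → Prop)
    (Rand : (ℕ → Bool) → (ℕ → Bool) → Prop)
    (hvals : ∀ A B, Gamma A B = 0 ∨ Gamma A B = 1/2 ∨ Gamma A B = 1)
    (hone : ∀ A B, Gamma A B = 1 ↔ leT A B)
    (hrand_meas : ∀ A, μ {B | Rand A B} = 1)
    (hrand_half : ∀ A B, Rand A B → 1/2 ≤ Gamma A B)
    (hSacks : ∀ X : ℕ → Bool, ¬ Computable X → μ {B | leT X B} = 0)
    (A : ℕ → Bool) (hA : ¬ Computable A) :
    μ {B | Gamma A B = 1/2} = 1 := by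
  refine measure_eq_one_of_diff_subset (hrand_meas A) (hSacks A hA) ?_
  rintro B ⟨hRand, hNotLeT⟩
  rcases hvals A B with hzero | hhalf | hGammaOne
  · linarith [hrand_half A B hRand]
  · exact hhalf
  · exact absurd ((hone A B).mp hGammaOne) hNotLeT
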